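/- Suppose among n nodes, a fraction (2/3 - ε')n have sent Commit messages for bit b and at least (1/3 - ε' + ε)n of the committers are forever-honest (where the total corrupt fraction is at most (1/3 - ε)). Then at most (2/3 + ε' - ε)n nodes may attempt to mine a vote for 1-b in the next iteration; with each attempt succeeding independently with probability λ/n, choosing ε' = ε/2, the probability that at least 2λ/3 of these attempts succeed is exp(-Ω(λ)). -/

import Mathlib

open MeasureTheory ProbabilityTheory

set_option maxHeartbeats 1000000 in
/-- Chernoff bound for votes on `1-b` in the next iteration: with
`m ≤ (2/3 + ε' - ε)n = (2/3 - ε/2)n` (taking `ε' = ε/2`) independent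
Bernoulli(`λ/n`) mining attempts, the probability that at least `2λ/3` succeed
is at most `exp(-cλ)` for a constant `c = c(ε) > 0`. -/
theorem stmt16 (ε : ℝ) (hε : 0 < ε) :
    ∃ c : ℝ, 0 < c ∧
      ∀ (n lam m : ℕ), 0 < n → lam ≤ n →
        (m : ℝ) ≤ (2 / 3 + ε / 2 - ε) * n →
        ∀ {Ω : Type} [MeasurableSpace Ω] (μ : Measure Ω), IsProbabilityMeasure μ →
          ∀ (X : Fin m → Ω → Bool), (∀ i, Measurable (X i)) →
            iIndepFun X μ →
            (∀ i, (μ {ω | X i ω = true}).toReal = (lam : ℝ) / n) →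
            (μ {ω | (2 * (lam : ℝ) / 3) ≤
                ((Finset.univ.filter fun i => X i ω = true).card : ℝ)}).toReal
              ≤ Real.exp (-c * lam) := by
  classical
  set t : ℝ := min (1/2) (3*ε/16) with ht_def
  have ht0 : 0 < t := lt_min (by norm_num) (by linarith)
  have ht_half : t ≤ 1/2 := min_le_left _ _
  have ht_eps : t ≤ 3*ε/16 := min_le_right _ _
  refine ⟨t * ε / 4, by positivity, ?_⟩
  intro n lam m hn hlam hm Ω _ μ hμ X hXm hXindep hXp
  -- real-valued indicators
  set g : Bool → ℝ := fun b => if b then 1 else 0 with hg_def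
  set Y : Fin m → Ω → ℝ := fun i ω => g (X i ω) with hY_def
  have hgm : Measurable g := measurable_of_countable g
  have hYm : ∀ i, Measurable (Y i) := fun i => hgm.comp (hXm i)
  have hYindep : iIndepFun Y μ :=
    hXindep.comp (fun _ => g) (fun _ => hgm)
  set p : ℝ := (lam : ℝ) / n with hp_def
  have hp0 : 0 ≤ p := by positivity
  -- rewrite the event
  have hset : {ω | (2 * (lam : ℝ) / 3) ≤
      ((Finset.univ.filter fun i => X i ω = true).card : ℝ)}
      = {ω | (2 * (lam : ℝ) / 3) ≤ (∑ i, Y i) ω} := by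
    ext ω
    simp only [Set.mem_setOf_eq, Finset.card_filter, Finset.sum_apply, hY_def, hg_def]
    push_cast
    rfl
  -- integrability of exp(t * Y i)
  have hbound : ∀ i ω, ‖Real.exp (t * Y i ω)‖ ≤ Real.exp t := by
    intro i ω
    rw [Real.norm_eq_abs, abs_of_pos (Real.exp_pos _), Real.exp_le_exp]
    simp only [hY_def, hg_def]
    by_cases h : X i ω <;> simp [h] <;> nlinarith
  have hint : ∀ i, Integrable (fun ω => Real.exp (t * Y i ω)) μ := by
    intro i
    refine ⟨(((hYm i).const_mul t).exp).aestronglyMeasurable, ?_⟩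
    exact HasFiniteIntegral.of_bounded (C := Real.exp t) (ae_of_all _ (hbound i))
  -- measurability of success sets
  have hSm : ∀ i : Fin m, MeasurableSet {ω | X i ω = true} :=
    fun i => (hXm i) (show MeasurableSet {b | b = true} by trivial)
  -- mgf of each Bernoulli indicator
  have hmgf : ∀ i, mgf (Y i) μ t = 1 + (Real.exp t - 1) * p := by
    intro i
    have heq : (fun ω => Real.exp (t * Y i ω))
        = fun ω => Set.indicator {ω | X i ω = true} (fun _ => Real.exp t - 1) ω + 1 := by
      funext ω
      by_cases h : X i ω = true
      · simp [Set.indicator_of_mem, h, hY_def, hg_def]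
      · simp only [hY_def, hg_def, Set.indicator_of_notMem (by simpa using h :
          ω ∉ {ω | X i ω = true})]
        simp [h]
    rw [mgf, heq, integral_add _ (integrable_const 1)]
    · rw [integral_indicator_const _ (hSm i), integral_const]
      simp only [measure_univ, probReal_univ, ENNReal.toReal_one, smul_eq_mul, one_mul, mul_one]
      rw [measureReal_def, hXp i]
      ring
    · exact (integrable_const (Real.exp t - 1)).indicator (hSm i)
  -- Chernoff bound
  have hcher := measure_ge_le_exp_mul_mgf (μ := μ) (X := ∑ i, Y i) (t := t)
    (2 * (lam : ℝ) / 3) ht0.le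
    (hYindep.integrable_exp_mul_sum hYm (fun i _ => hint i))
  rw [hset]
  refine le_trans hcher ?_
  rw [hYindep.mgf_sum hYm]
  -- bound the product of mgfs
  have hprod : ∏ i : Fin m, mgf (Y i) μ t ≤ Real.exp (m * ((Real.exp t - 1) * p)) := by
    calc ∏ i : Fin m, mgf (Y i) μ t
        ≤ ∏ i : Fin m, Real.exp ((Real.exp t - 1) * p) := by
          refine Finset.prod_le_prod (fun i _ => mgf_nonneg) (fun i _ => ?_)
          rw [hmgf i]
          have := Real.add_one_le_exp ((Real.exp t - 1) * p)
          linarith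
      _ = Real.exp (m * ((Real.exp t - 1) * p)) := by
          rw [Finset.prod_const, ← Real.exp_nat_mul]
          simp
  calc Real.exp (-t * (2 * (lam : ℝ) / 3)) * ∏ i : Fin m, mgf (Y i) μ t
      ≤ Real.exp (-t * (2 * (lam : ℝ) / 3)) * Real.exp (m * ((Real.exp t - 1) * p)) := by
        exact mul_le_mul_of_nonneg_left hprod (Real.exp_pos _).le
    _ = Real.exp (-t * (2 * (lam : ℝ) / 3) + m * ((Real.exp t - 1) * p)) := by
        rw [← Real.exp_add]
    _ ≤ Real.exp (-(t * ε / 4) * lam) := by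
        rw [Real.exp_le_exp]
        -- key numeric estimates
        have het : Real.exp t - 1 ≤ t + 2 * t^2 := by
          have h1 : 1 - t ≤ Real.exp (-t) := by
            have := Real.add_one_le_exp (-t); linarith
          have h2 : Real.exp t ≤ 1 / (1 - t) := by
            rw [le_div_iff₀ (by linarith : (0:ℝ) < 1 - t)]
            have : Real.exp t * (1 - t) ≤ Real.exp t * Real.exp (-t) :=
              mul_le_mul_of_nonneg_left h1 (Real.exp_pos _).le
            rwa [← Real.exp_add, add_neg_cancel, Real.exp_zero] at this
          have h3 : 1 / (1 - t) ≤ 1 + t + 2 * t^2 := by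
            rw [div_le_iff₀ (by linarith : (0:ℝ) < 1 - t)]
            nlinarith
          linarith
        have het0 : 0 ≤ Real.exp t - 1 := by
          have := Real.add_one_le_exp t; nlinarith [Real.exp_pos t]
        have hmp : (m : ℝ) * p ≤ (2/3 - ε/2) * lam := by
          have : (m : ℝ) * p ≤ ((2 / 3 + ε / 2 - ε) * n) * p :=
            mul_le_mul_of_nonneg_right hm hp0
          calc (m : ℝ) * p ≤ ((2 / 3 + ε / 2 - ε) * n) * p := this
            _ = (2/3 - ε/2) * lam := by
              rw [hp_def]; field_simp; ring
        have hlam0 : (0:ℝ) ≤ lam := Nat.cast_nonneg _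
        have hmp0 : 0 ≤ (m:ℝ) * p := by positivity
        have hkey : (m : ℝ) * ((Real.exp t - 1) * p) ≤ (2/3 - ε/2) * lam * (t + 2*t^2) := by
          calc (m : ℝ) * ((Real.exp t - 1) * p) = ((m:ℝ) * p) * (Real.exp t - 1) := by ring
            _ ≤ ((2/3 - ε/2) * lam) * (Real.exp t - 1) :=
                mul_le_mul_of_nonneg_right hmp het0
            _ ≤ ((2/3 - ε/2) * lam) * (t + 2*t^2) := by
                refine mul_le_mul_of_nonneg_left het ?_
                linarith [hmp0.trans hmp]
        have hbr : -t * (2/3) + (2/3 - ε/2) * (t + 2*t^2) ≤ -(t*ε/4) := by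
          nlinarith [mul_nonneg hε.le (sq_nonneg t), mul_pos ht0 ht0]
        nlinarith [hkey, mul_le_mul_of_nonneg_left hbr hlam0]
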